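/- arXiv:2104.14675 — 2 statements merged into one kernel-verified Lean document; each statement's English description precedes it below -/
import Mathlib

section
/- Consider the scalar advection equation u_t + a u_x = 0 with a > 0, discretized by the upwind scheme L on a uniform grid with ratio λ = aΔt/Δx, whose amplification factor is g(ξ) = 1 - λ(1 - e^{-iξ}). Let L* be the same scheme applied to the time-reversed equation u_t - a u_x = 0 (downwind in reversed time), with amplification factor g*(ξ) = 1 - λ(1 - e^{iξ}) = conj(g(ξ)). Then the BFECC amplification factor is G(ξ) = g(ξ)(1 + (1/2)(1 - |g(ξ)|²)), and |G(ξ)| ≤ 1 for all ξ whenever |g(ξ)| ≤ 2. -/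
/-!
Since `1 + (1 - r²)/2` is real, `|G| = p(r)` with `r = |g|` and `p(r) = r (3 - r²)/2`. The bound
`-1 ≤ p(r) ≤ 1` on `[0, 2]` follows from the factorizations `1 - p(r) = (r - 1)² (r + 2)/2` and
`1 + p(r) = (r + 1)² (2 - r)/2`.
-/

open Complex

theorem abs_mul_one_add_half_one_sub_sq_le_one {r : ℝ} (hr₀ : 0 ≤ r) (hr₂ : r ≤ 2) :
    |r * (1 + 1 / 2 * (1 - r ^ 2))| ≤ 1 := by
  have hupper : 1 - r * (1 + 1 / 2 * (1 - r ^ 2)) = (r - 1) ^ 2 * (r + 2) / 2 := by ring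
  have hlower : 1 + r * (1 + 1 / 2 * (1 - r ^ 2)) = (r + 1) ^ 2 * (2 - r) / 2 := by ring
  refine abs_le.mpr ⟨?_, ?_⟩
  · linarith [mul_nonneg (sq_nonneg (r + 1)) (sub_nonneg.mpr hr₂)]
  · linarith [mul_nonneg (sq_nonneg (r - 1)) (by linarith : (0 : ℝ) ≤ r + 2)]

theorem RCLike.norm_mul_one_add_half_one_sub_norm_sq_le_one {𝕜 : Type*} [RCLike 𝕜] {z : 𝕜}
    (hz : ‖z‖ ≤ 2) : ‖z * (1 + (1 / 2 : 𝕜) * (1 - ((‖z‖ : ℝ) : 𝕜) ^ 2))‖ ≤ 1 := by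
  have hreal : (1 + (1 / 2 : 𝕜) * (1 - ((‖z‖ : ℝ) : 𝕜) ^ 2)) =
      ((1 + 1 / 2 * (1 - ‖z‖ ^ 2) : ℝ) : 𝕜) := by push_cast; ring
  rw [hreal, norm_mul, RCLike.norm_ofReal, ← abs_norm z, ← abs_mul, abs_norm]
  exact abs_mul_one_add_half_one_sub_sq_le_one (norm_nonneg z) hz

theorem conj_one_sub_ofReal_mul_one_sub_exp_neg_I_mul (lam ξ : ℝ) :
    starRingEnd ℂ (1 - lam * (1 - exp (-I * ξ))) = 1 - lam * (1 - exp (I * ξ)) := by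
  simp only [map_sub, map_mul, map_one, conj_ofReal, ← exp_conj, map_neg, conj_I, neg_neg]

/-- Von Neumann analysis of BFECC for the upwind scheme applied to u_t + a u_x = 0:
the backward scheme's amplification factor is the complex conjugate of g(ξ), the BFECC
amplification factor is G(ξ) = g(ξ)(1 + (1/2)(1 - |g(ξ)|²)), and |G(ξ)| ≤ 1 whenever
|g(ξ)| ≤ 2. -/
theorem bfecc_upwind_stability (lam ξ : ℝ) :
    let g : ℂ := 1 - (lam : ℂ) * (1 - Complex.exp (-Complex.I * (ξ : ℂ)))
    let gstar : ℂ := 1 - (lam : ℂ) * (1 - Complex.exp (Complex.I * (ξ : ℂ)))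
    let G : ℂ := g * (1 + (1/2 : ℂ) * (1 - ((‖g‖ : ℝ) : ℂ)^2))
    gstar = (starRingEnd ℂ) g ∧ (‖g‖ ≤ 2 → ‖G‖ ≤ 1) :=
  ⟨(conj_one_sub_ofReal_mul_one_sub_exp_neg_I_mul lam ξ).symm,
    RCLike.norm_mul_one_add_half_one_sub_norm_sq_le_one⟩
end

section
/- Let f : ℝ² → ℝ be C² and let the 5-point stencil be pᵢ = p₀ + δᵢ with ‖δᵢ‖ ≤ C h and the design matrix A (rows (δᵢ, 1)) satisfying a uniform full-rank condition σ_min(A diag(1/h,1/h,1)) ≥ c > 0. Then the least-squares slope coefficients (c₀, c₁) of the linear fit to data f(pᵢ) satisfy ‖(c₀,c₁) − ∇f(p₀)‖ ≤ C' h, where C' depends only on c, C, and the second-derivative bound of f. -/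
/-!
Compare the least-squares minimiser with the competitor built from the exact data at `p₀`
(the affine function `f p₀ + ∇f(p₀)·δ`). By Taylor's theorem the competitor's residuals are
`O(K C² h²)`, and minimality plus the triangle inequality bound the difference of the two fitted
affine functions at the stencil points by twice the competitor's residual. The conditioning
hypothesis, applied to the coefficient error with slopes scaled by `h`, turns this into
`c h ‖slope error‖ ≤ O(K C² h²)`.
-/

open Finset

section Taylor

variable {E F : Type*} [NormedAddCommGroup E] [NormedSpace ℝ E]
  [NormedAddCommGroup F] [NormedSpace ℝ F] {f : E → F} {K : ℝ}

theorem norm_fderiv_sub_fderiv_le_of_norm_iteratedFDeriv_two_le (hf : ContDiff ℝ 2 f)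
    (hK : ∀ x, ‖iteratedFDeriv ℝ 2 f x‖ ≤ K) (x y : E) :
    ‖fderiv ℝ f x - fderiv ℝ f y‖ ≤ K * ‖x - y‖ := by
  have hdiff : Differentiable ℝ (fderiv ℝ f) :=
    (hf.fderiv_right (m := 1) le_rfl).differentiable one_ne_zero
  refine convex_univ.norm_image_sub_le_of_norm_fderiv_le (fun z _ => hdiff z) (fun z _ => ?_)
    (Set.mem_univ y) (Set.mem_univ x)
  rw [← norm_iteratedFDeriv_one, norm_iteratedFDeriv_fderiv]
  exact hK z

theorem norm_sub_sub_fderiv_le_of_norm_iteratedFDeriv_two_le (hf : ContDiff ℝ 2 f)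
    (hK : ∀ x, ‖iteratedFDeriv ℝ 2 f x‖ ≤ K) (x d : E) :
    ‖f (x + d) - f x - fderiv ℝ f x d‖ ≤ K * ‖d‖ ^ 2 := by
  have hK₀ : 0 ≤ K := (norm_nonneg _).trans (hK x)
  have key := (convex_closedBall x ‖d‖).norm_image_sub_le_of_norm_fderiv_le'
    (y := x + d) (φ := fderiv ℝ f x) (C := K * ‖d‖)
    (fun z _ => (hf.differentiable two_ne_zero).differentiableAt)
    (fun z hz => (norm_fderiv_sub_fderiv_le_of_norm_iteratedFDeriv_two_le hf hK z x).trans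
      (mul_le_mul_of_nonneg_left (mem_closedBall_iff_norm.1 hz) hK₀))
    (Metric.mem_closedBall_self (norm_nonneg d)) (by simp)
  simpa [sq, mul_assoc] using key

end Taylor

theorem LinearMap.apply_eq_fst_smul_add_snd_smul {R M : Type*} [Semiring R] [AddCommMonoid M]
    [Module R M] (L : R × R →ₗ[R] M) (d : R × R) :
    L d = d.1 • L (1, 0) + d.2 • L (0, 1) := by
  conv_lhs => rw [show d = d.1 • ((1 : R), (0 : R)) + d.2 • ((0 : R), (1 : R)) by ext <;> simp]
  rw [map_add, map_smul, map_smul]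

theorem sum_sq_le_four_mul_of_sum_add_sq_le {ι : Type*} (s : Finset ι) (t r : ι → ℝ)
    (h : ∑ i ∈ s, (t i + r i) ^ 2 ≤ ∑ i ∈ s, r i ^ 2) :
    ∑ i ∈ s, t i ^ 2 ≤ 4 * ∑ i ∈ s, r i ^ 2 := by
  calc ∑ i ∈ s, t i ^ 2 ≤ ∑ i ∈ s, (2 * (t i + r i) ^ 2 + 2 * r i ^ 2) :=
        sum_le_sum fun i _ => by nlinarith [sq_nonneg (t i + 2 * r i)]
    _ = 2 * ∑ i ∈ s, (t i + r i) ^ 2 + 2 * ∑ i ∈ s, r i ^ 2 := by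
        rw [sum_add_distrib, ← mul_sum, ← mul_sum]
    _ ≤ 4 * ∑ i ∈ s, r i ^ 2 := by linarith

def affineFit (cf : Fin 3 → ℝ) (d : ℝ × ℝ) : ℝ := cf 0 * d.1 + cf 1 * d.2 + cf 2

theorem affineFit_sub (a b : Fin 3 → ℝ) (d : ℝ × ℝ) :
    affineFit a d - affineFit b d = affineFit (a - b) d := by
  simp only [affineFit, Pi.sub_apply]
  ring

noncomputable def tangentCoeffs (f : ℝ × ℝ → ℝ) (p₀ : ℝ × ℝ) : Fin 3 → ℝ :=
  ![fderiv ℝ f p₀ (1, 0), fderiv ℝ f p₀ (0, 1), f p₀]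

theorem abs_affineFit_tangentCoeffs_sub_le {f : ℝ × ℝ → ℝ} {K : ℝ} (hf : ContDiff ℝ 2 f)
    (hK : ∀ x, ‖iteratedFDeriv ℝ 2 f x‖ ≤ K) (p₀ d : ℝ × ℝ) :
    |affineFit (tangentCoeffs f p₀) d - f (p₀ + d)| ≤ K * ‖d‖ ^ 2 := by
  have hlin := (fderiv ℝ f p₀ : ℝ × ℝ →ₗ[ℝ] ℝ).apply_eq_fst_smul_add_snd_smul d
  simp only [ContinuousLinearMap.coe_coe, smul_eq_mul] at hlin
  have htaylor := norm_sub_sub_fderiv_le_of_norm_iteratedFDeriv_two_le hf hK p₀ d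
  rw [Real.norm_eq_abs, hlin, ← abs_neg] at htaylor
  refine le_of_eq_of_le ?_ htaylor
  simp only [affineFit, tangentCoeffs, Matrix.cons_val_zero, Matrix.cons_val_one,
    Matrix.cons_val_two, Matrix.head_cons, Matrix.tail_cons]
  ring_nf

section LeastSquares

variable {ι : Type*} [Fintype ι] (δ : ι → ℝ × ℝ)

theorem sum_sq_affineFit_sub_le_of_forall_le {y : ι → ℝ} {cf : Fin 3 → ℝ}
    (hmin : ∀ cf' : Fin 3 → ℝ,
      ∑ i, (affineFit cf (δ i) - y i) ^ 2 ≤ ∑ i, (affineFit cf' (δ i) - y i) ^ 2)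
    (g : Fin 3 → ℝ) :
    ∑ i, affineFit (cf - g) (δ i) ^ 2 ≤ 4 * ∑ i, (affineFit g (δ i) - y i) ^ 2 :=
  sum_sq_le_four_mul_of_sum_add_sq_le _ _ _ <| by
    simpa only [← affineFit_sub, sub_add_sub_cancel] using hmin g

theorem sq_mul_sq_mul_add_sq_le_sum_sq_affineFit {c h : ℝ} (hh : h ≠ 0)
    (hsv : ∀ v : Fin 3 → ℝ, c ^ 2 * (v 0 ^ 2 + v 1 ^ 2 + v 2 ^ 2) ≤
      ∑ i, ((δ i).1 / h * v 0 + (δ i).2 / h * v 1 + v 2) ^ 2)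
    (e : Fin 3 → ℝ) :
    c ^ 2 * h ^ 2 * (e 0 ^ 2 + e 1 ^ 2) ≤ ∑ i, affineFit e (δ i) ^ 2 := by
  have hv := hsv ![h * e 0, h * e 1, e 2]
  have hscale : ∀ i, (δ i).1 / h * (h * e 0) + (δ i).2 / h * (h * e 1) + e 2
      = affineFit e (δ i) := fun i => by
    simp only [affineFit]
    field_simp
  simp only [Matrix.cons_val_zero, Matrix.cons_val_one, Matrix.cons_val_two, Matrix.head_cons,
    Matrix.tail_cons, hscale] at hv
  nlinarith [mul_nonneg (sq_nonneg c) (sq_nonneg (e 2))]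

end LeastSquares

/-- First order accuracy of the least-squares gradient on an irregular stencil: if the
stencil points lie within C·h of p₀, the scaled design matrix is uniformly
well-conditioned (smallest singular value ≥ c), and f is C² with second derivatives
bounded by K, then any least-squares minimizer has slope coefficients within
C'·h of ∇f(p₀), with C' depending only on c, C and K. -/
theorem least_squares_gradient_first_order :
    ∀ c C K : ℝ, 0 < c → 0 < C → 0 ≤ K →
    ∃ C' : ℝ, 0 < C' ∧
      ∀ (f : ℝ × ℝ → ℝ) (p₀ : ℝ × ℝ) (δ : Fin 5 → ℝ × ℝ) (h : ℝ), 0 < h →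
        ContDiff ℝ 2 f →
        (∀ x : ℝ × ℝ, ‖iteratedFDeriv ℝ 2 f x‖ ≤ K) →
        (∀ i : Fin 5, ‖δ i‖ ≤ C * h) →
        (∀ v : Fin 3 → ℝ, c^2 * (v 0^2 + v 1^2 + v 2^2) ≤
          ∑ i : Fin 5, ((δ i).1 / h * v 0 + (δ i).2 / h * v 1 + v 2)^2) →
        ∀ cf : Fin 3 → ℝ,
          (∀ cf' : Fin 3 → ℝ,
            (∑ i : Fin 5, (cf 0 * (δ i).1 + cf 1 * (δ i).2 + cf 2 - f (p₀ + δ i))^2) ≤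
            (∑ i : Fin 5, (cf' 0 * (δ i).1 + cf' 1 * (δ i).2 + cf' 2 - f (p₀ + δ i))^2)) →
          Real.sqrt ((cf 0 - fderiv ℝ f p₀ (1, 0))^2 + (cf 1 - fderiv ℝ f p₀ (0, 1))^2) ≤
            C' * h := by
  intro c C K hc _ hK
  -- the argument yields `√20 · K C² / c`; the `+ 1` keeps `C'` positive when `K = 0`
  refine ⟨(5 * K * C ^ 2 + 1) / c, by positivity, ?_⟩
  intro f p₀ δ h hh hf hf₂ hδ hsv cf hmin
  have hres : ∀ i, (affineFit (tangentCoeffs f p₀) (δ i) - f (p₀ + δ i)) ^ 2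
      ≤ (K * C ^ 2 * h ^ 2) ^ 2 := fun i => by
    rw [← sq_abs]
    gcongr
    calc _ ≤ K * ‖δ i‖ ^ 2 := abs_affineFit_tangentCoeffs_sub_le hf hf₂ p₀ (δ i)
      _ ≤ K * (C * h) ^ 2 := by gcongr; exact hδ i
      _ = K * C ^ 2 * h ^ 2 := by ring
  have hsum : ∑ i, (affineFit (tangentCoeffs f p₀) (δ i) - f (p₀ + δ i)) ^ 2
      ≤ 5 * (K * C ^ 2 * h ^ 2) ^ 2 := by
    simpa using sum_le_card_nsmul univ _ _ fun i _ => hres i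
  have hfit := sum_sq_affineFit_sub_le_of_forall_le δ hmin (tangentCoeffs f p₀)
  have hcond : c ^ 2 * h ^ 2 *
      ((cf 0 - fderiv ℝ f p₀ (1, 0)) ^ 2 + (cf 1 - fderiv ℝ f p₀ (0, 1)) ^ 2)
      ≤ ∑ i, affineFit (cf - tangentCoeffs f p₀) (δ i) ^ 2 :=
    sq_mul_sq_mul_add_sq_le_sum_sq_affineFit δ hh.ne' hsv (cf - tangentCoeffs f p₀)
  have hslope : c ^ 2 * ((cf 0 - fderiv ℝ f p₀ (1, 0)) ^ 2 + (cf 1 - fderiv ℝ f p₀ (0, 1)) ^ 2)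
      ≤ 20 * (K * C ^ 2) ^ 2 * h ^ 2 := by
    refine le_of_mul_le_mul_left ?_ (by positivity : 0 < h ^ 2)
    nlinarith
  rw [Real.sqrt_le_left (by positivity), div_mul_eq_mul_div, div_pow, le_div_iff₀ (by positivity)]
  nlinarith [mul_nonneg hK (sq_nonneg C), sq_nonneg h]
end
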